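/- arXiv:1802.09269 — 5 statements merged into one kernel-verified Lean document; each statement's English description precedes it below -/
import Mathlib

section
/- Let q and q̂ be two income distributions on [0,1] with equal means, μ = ∫₀¹ q(x)dx = ∫₀¹ q̂(x)dx. Suppose there exists x* ∈ [0,1] such that q̂(x) ≤ q(x) for all x ≤ x* and q̂(x) > q(x) for all x > x*. Then G(q) ≤ G(q̂). -/
open MeasureTheory Set

/-!
Single crossing with equal means gives Lorenz dominance `Q̂(t) ≤ Q(t)` on `[0,1]`: for `t ≤ x*`
pointwise, and for `t > x*` because the tails `∫ₜ¹` compare the other way while the totals agree.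
Integrating over `t` and dividing by the mean `μ ≥ 0` yields `G(q) ≤ G(q̂)`.
-/

/-- The Gini coefficient of an income distribution `q` on `[0,1]`:
`G(q) = 1 − 2∫₀¹ L(t)dt` where `L(t) = Q(t)/μ`, `Q(t) = ∫₀ᵗ q` and `μ = ∫₀¹ q`. -/
noncomputable def gini (q : ℝ → ℝ) : ℝ :=
  1 - 2 * ∫ t in (0:ℝ)..1, (∫ x in (0:ℝ)..t, q x) / (∫ x in (0:ℝ)..1, q x)

theorem intervalIntegral_le_of_single_crossing {f g : ℝ → ℝ} {a b c t : ℝ}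
    (hf : IntervalIntegrable f volume a b) (hg : IntervalIntegrable g volume a b)
    (heq : ∫ x in a..b, f x = ∫ x in a..b, g x)
    (hle : ∀ x ∈ Icc a b, x ≤ c → g x ≤ f x) (hge : ∀ x ∈ Icc a b, c < x → f x ≤ g x)
    (ht : t ∈ Icc a b) :
    ∫ x in a..t, g x ≤ ∫ x in a..t, f x := by
  have hsub_left : uIcc a t ⊆ uIcc a b :=
    uIcc_subset_uIcc left_mem_uIcc (mem_uIcc_of_le ht.1 ht.2)
  have hsub_right : uIcc t b ⊆ uIcc a b :=
    uIcc_subset_uIcc (mem_uIcc_of_le ht.1 ht.2) right_mem_uIcc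
  rcases le_or_gt t c with htc | hct
  · exact intervalIntegral.integral_mono_on ht.1 (hg.mono_set hsub_left) (hf.mono_set hsub_left)
      fun x hx => hle x ⟨hx.1, hx.2.trans ht.2⟩ (hx.2.trans htc)
  · have htail : ∫ x in t..b, f x ≤ ∫ x in t..b, g x :=
      intervalIntegral.integral_mono_on ht.2 (hf.mono_set hsub_right) (hg.mono_set hsub_right)
        fun x hx => hge x ⟨ht.1.trans hx.1, hx.2⟩ (hct.trans_le hx.1)
    have hsplit_f := intervalIntegral.integral_add_adjacent_intervals
      (hf.mono_set hsub_left) (hf.mono_set hsub_right)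
    have hsplit_g := intervalIntegral.integral_add_adjacent_intervals
      (hg.mono_set hsub_left) (hg.mono_set hsub_right)
    linarith

theorem gini_le_of_primitive_le {q qh : ℝ → ℝ}
    (hq : IntervalIntegrable q volume 0 1) (hqh : IntervalIntegrable qh volume 0 1)
    (hmean : ∫ x in (0:ℝ)..1, q x = ∫ x in (0:ℝ)..1, qh x) (hμ : 0 ≤ ∫ x in (0:ℝ)..1, q x)
    (hQ : ∀ t ∈ Icc (0:ℝ) 1, ∫ x in (0:ℝ)..t, qh x ≤ ∫ x in (0:ℝ)..t, q x) :
    gini q ≤ gini qh := by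
  have hQ_int : IntervalIntegrable (fun t => ∫ x in (0:ℝ)..t, q x) volume 0 1 :=
    (intervalIntegral.continuousOn_primitive_interval' hq left_mem_uIcc).intervalIntegrable
  have hQh_int : IntervalIntegrable (fun t => ∫ x in (0:ℝ)..t, qh x) volume 0 1 :=
    (intervalIntegral.continuousOn_primitive_interval' hqh left_mem_uIcc).intervalIntegrable
  have hlorenz : ∫ t in (0:ℝ)..1, (∫ x in (0:ℝ)..t, qh x) / ∫ x in (0:ℝ)..1, q x
      ≤ ∫ t in (0:ℝ)..1, (∫ x in (0:ℝ)..t, q x) / ∫ x in (0:ℝ)..1, q x :=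
    intervalIntegral.integral_mono_on zero_le_one (hQh_int.div_const _) (hQ_int.div_const _)
      fun t ht => div_le_div_of_nonneg_right (hQ t ht) hμ
  unfold gini
  rw [← hmean]
  linarith

theorem gini_le_of_single_crossing_general
    (q qh : ℝ → ℝ)
    (hq_mono : MonotoneOn q (Icc 0 1))
    (hq0 : 0 < q 0)
    (hq_int : IntervalIntegrable q volume 0 1)
    (hqh_int : IntervalIntegrable qh volume 0 1)
    (hmean : ∫ x in (0:ℝ)..1, q x = ∫ x in (0:ℝ)..1, qh x)
    (xs : ℝ)
    (hle : ∀ x ∈ Icc (0:ℝ) 1, x ≤ xs → qh x ≤ q x)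
    (hgt : ∀ x ∈ Icc (0:ℝ) 1, xs < x → q x < qh x) :
    gini q ≤ gini qh := by
  have hμ : 0 ≤ ∫ x in (0:ℝ)..1, q x :=
    intervalIntegral.integral_nonneg zero_le_one fun x hx =>
      hq0.le.trans (hq_mono (left_mem_Icc.2 zero_le_one) hx hx.1)
  exact gini_le_of_primitive_le hq_int hqh_int hmean hμ fun t ht =>
    intervalIntegral_le_of_single_crossing hq_int hqh_int hmean hle
      (fun x hx hxs => (hgt x hx hxs).le) ht

/-- If two income distributions `q`, `q̂` on `[0,1]` have equal means and cross once
(`q̂ ≤ q` before `x*` and `q̂ > q` after `x*`), then `G(q) ≤ G(q̂)`. -/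
theorem gini_le_of_single_crossing
    (q qh : ℝ → ℝ)
    (hq_meas : Measurable q) (hqh_meas : Measurable qh)
    (hq_mono : MonotoneOn q (Icc 0 1)) (hqh_mono : MonotoneOn qh (Icc 0 1))
    (hq0 : 0 < q 0) (hqh0 : 0 < qh 0)
    (hq_int : IntervalIntegrable q volume 0 1)
    (hqh_int : IntervalIntegrable qh volume 0 1)
    (hmean : ∫ x in (0:ℝ)..1, q x = ∫ x in (0:ℝ)..1, qh x)
    (xs : ℝ) (hxs : xs ∈ Icc (0:ℝ) 1)
    (hle : ∀ x ∈ Icc (0:ℝ) 1, x ≤ xs → qh x ≤ q x)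
    (hgt : ∀ x ∈ Icc (0:ℝ) 1, xs < x → q x < qh x) :
    gini q ≤ gini qh :=
  gini_le_of_single_crossing_general q qh hq_mono hq0 hq_int hqh_int hmean xs hle hgt
end

section
/- Let q and q̂ be two income distributions on [0,1] such that q̂(x) = β(x)·q(x) for a function β with 0 < β(z) ≤ β(y) ≤ 1 whenever z ≤ y (i.e. q̂ is obtained from q by a transformation that reduces lower incomes relatively more than higher incomes, preserving income order). Then G(q) ≤ G(q̂). -/
open MeasureTheory Set

/-!
Write `Q` and `Q̂` for the cumulative incomes of `q` and `q̂ = β q`, split at a point `t` into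
the parts below and above `t`. Since `β` is nondecreasing, `Q̂(t) ≤ β(t) Q(t)` and
`β(t) (μ - Q(t)) ≤ μ̂ - Q̂(t)`; multiplying these out gives `Q̂(t) μ ≤ Q(t) μ̂`, i.e. the Lorenz
curve of `q̂` lies below that of `q`. Integrating over `[0,1]` gives `G(q) ≤ G(q̂)`.
-/

noncomputable def lorenz (q : ℝ → ℝ) (t : ℝ) : ℝ :=
  (∫ x in (0:ℝ)..t, q x) / ∫ x in (0:ℝ)..1, q x

theorem gini_eq_one_sub_two_mul_integral_lorenz (q : ℝ → ℝ) :
    gini q = 1 - 2 * ∫ t in (0:ℝ)..1, lorenz q t :=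
  rfl

theorem intervalIntegrable_lorenz {q : ℝ → ℝ} (hq : IntervalIntegrable q volume 0 1) :
    IntervalIntegrable (lorenz q) volume 0 1 :=
  ((intervalIntegral.continuousOn_primitive_interval' hq left_mem_uIcc).div_const _)
    |>.intervalIntegrable

theorem gini_le_gini_of_lorenz_le {q q' : ℝ → ℝ} (hq : IntervalIntegrable q volume 0 1)
    (hq' : IntervalIntegrable q' volume 0 1) (h : ∀ t ∈ Icc (0:ℝ) 1, lorenz q' t ≤ lorenz q t) :
    gini q ≤ gini q' := by
  have := intervalIntegral.integral_mono_on zero_le_one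
    (intervalIntegrable_lorenz hq') (intervalIntegrable_lorenz hq) h
  rw [gini_eq_one_sub_two_mul_integral_lorenz, gini_eq_one_sub_two_mul_integral_lorenz]
  linarith

theorem intervalIntegral_pos_of_monotoneOn {f : ℝ → ℝ} {a b : ℝ} (hab : a < b)
    (hf : IntervalIntegrable f volume a b) (hf_mono : MonotoneOn f (Icc a b)) (ha : 0 < f a) :
    0 < ∫ x in a..b, f x := by
  have h : ∫ x in a..b, f a ≤ ∫ x in a..b, f x :=
    intervalIntegral.integral_mono_on hab.le intervalIntegrable_const hf
      fun x hx => hf_mono (left_mem_Icc.2 hab.le) hx hx.1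
  rw [intervalIntegral.integral_const, smul_eq_mul] at h
  nlinarith

/-- The `β`-weighted share of `[a,t]` in `[a,b]` is at most the unweighted share, in
cross-multiplied form so that no positivity of the totals is needed. -/
theorem integral_mul_mul_integral_le_of_monotoneOn {f β : ℝ → ℝ} {a t b : ℝ} (hat : a ≤ t)
    (htb : t ≤ b) (hf : IntervalIntegrable f volume a b)
    (hβf : IntervalIntegrable (fun x => β x * f x) volume a b)
    (hf_nonneg : ∀ x ∈ Icc a b, 0 ≤ f x) (hβ : MonotoneOn β (Icc a b)) :
    (∫ x in a..t, β x * f x) * (∫ x in a..b, f x) ≤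
      (∫ x in a..t, f x) * ∫ x in a..b, β x * f x := by
  have ht : t ∈ Icc a b := ⟨hat, htb⟩
  have hsub_left : uIcc a t ⊆ uIcc a b := uIcc_subset_uIcc_left (mem_uIcc_of_le hat htb)
  have hsub_right : uIcc t b ⊆ uIcc a b := uIcc_subset_uIcc_right (mem_uIcc_of_le hat htb)
  have hf₁ := hf.mono_set hsub_left
  have hf₂ := hf.mono_set hsub_right
  have hβf₁ := hβf.mono_set hsub_left
  have hβf₂ := hβf.mono_set hsub_right
  have lower_le : ∫ x in a..t, β x * f x ≤ β t * ∫ x in a..t, f x := by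
    rw [← intervalIntegral.integral_const_mul]
    refine intervalIntegral.integral_mono_on hat hβf₁ (hf₁.const_mul _) fun x hx => ?_
    have hx' : x ∈ Icc a b := ⟨hx.1, hx.2.trans htb⟩
    exact mul_le_mul_of_nonneg_right (hβ hx' ht hx.2) (hf_nonneg x hx')
  have upper_ge : β t * ∫ x in t..b, f x ≤ ∫ x in t..b, β x * f x := by
    rw [← intervalIntegral.integral_const_mul]
    refine intervalIntegral.integral_mono_on htb (hf₂.const_mul _) hβf₂ fun x hx => ?_
    have hx' : x ∈ Icc a b := ⟨hat.trans hx.1, hx.2⟩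
    exact mul_le_mul_of_nonneg_right (hβ ht hx' hx.1) (hf_nonneg x hx')
  have lower_nonneg : 0 ≤ ∫ x in a..t, f x :=
    intervalIntegral.integral_nonneg hat fun x hx => hf_nonneg x ⟨hx.1, hx.2.trans htb⟩
  have upper_nonneg : 0 ≤ ∫ x in t..b, f x :=
    intervalIntegral.integral_nonneg htb fun x hx => hf_nonneg x ⟨hat.trans hx.1, hx.2⟩
  rw [← intervalIntegral.integral_add_adjacent_intervals hf₁ hf₂,
    ← intervalIntegral.integral_add_adjacent_intervals hβf₁ hβf₂]
  nlinarith [mul_le_mul_of_nonneg_right lower_le upper_nonneg,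
    mul_le_mul_of_nonneg_left upper_ge lower_nonneg]

theorem gini_le_of_regressive_scaling_general
    (q β : ℝ → ℝ)
    (hq_mono : MonotoneOn q (Icc 0 1)) (hq0 : 0 < q 0)
    (hq_int : IntervalIntegrable q volume 0 1)
    (hqh_int : IntervalIntegrable (fun x => β x * q x) volume 0 1)
    (hβ_pos : ∀ x ∈ Icc (0:ℝ) 1, 0 < β x)
    (hβ_mono : MonotoneOn β (Icc 0 1)) :
    gini q ≤ gini (fun x => β x * q x) := by
  have hq_pos : ∀ x ∈ Icc (0:ℝ) 1, 0 < q x := fun x hx =>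
    hq0.trans_le (hq_mono (left_mem_Icc.2 zero_le_one) hx hx.1)
  have hμ_pos : 0 < ∫ x in (0:ℝ)..1, q x :=
    intervalIntegral_pos_of_monotoneOn zero_lt_one hq_int hq_mono hq0
  have hμ_scaled_pos : 0 < ∫ x in (0:ℝ)..1, β x * q x :=
    intervalIntegral_pos_of_monotoneOn zero_lt_one hqh_int
      (hβ_mono.mul hq_mono (fun x hx => (hβ_pos x hx).le) fun x hx => (hq_pos x hx).le)
      (mul_pos (hβ_pos 0 (left_mem_Icc.2 zero_le_one)) hq0)
  refine gini_le_gini_of_lorenz_le hq_int hqh_int fun t ht => ?_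
  rw [lorenz, lorenz, div_le_div_iff₀ hμ_scaled_pos hμ_pos]
  exact integral_mul_mul_integral_le_of_monotoneOn ht.1 ht.2 hq_int hqh_int
    (fun x hx => (hq_pos x hx).le) hβ_mono

/-- If `q̂(x) = β(x)·q(x)` where `β` is nondecreasing with `0 < β ≤ 1` on `[0,1]`
(i.e. `q̂` is obtained from `q` by reducing lower incomes relatively more than higher
incomes, preserving income order), then `G(q) ≤ G(q̂)`. -/
theorem gini_le_of_regressive_scaling
    (q β : ℝ → ℝ)
    (hq_meas : Measurable q) (hβ_meas : Measurable β)
    (hq_mono : MonotoneOn q (Icc 0 1)) (hq0 : 0 < q 0)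
    (hq_int : IntervalIntegrable q volume 0 1)
    (hqh_int : IntervalIntegrable (fun x => β x * q x) volume 0 1)
    (hβ_pos : ∀ x ∈ Icc (0:ℝ) 1, 0 < β x)
    (hβ_le_one : ∀ x ∈ Icc (0:ℝ) 1, β x ≤ 1)
    (hβ_mono : MonotoneOn β (Icc 0 1)) :
    gini q ≤ gini (fun x => β x * q x) :=
  gini_le_of_regressive_scaling_general q β hq_mono hq0 hq_int hqh_int hβ_pos hβ_mono
end

section
/- Let F be a Nash equilibrium flow of a symmetric nonatomic congestion game with type-specific costs, with agent costs given by either cost^F(x) = S^F(x) (CF1) or cost^F(x) = q(x)·S^F(x) (CF2). Then the iniquity index of the game, I(Γ) = lim_{α→0⁺} (G(q_α) − G(q))/α with q_α(x) = q(x) − α·cost^F(x), is nonnegative. -/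
open MeasureTheory Set Filter

/-- The congestion of edge `e` under flow `F`. -/
noncomputable def congestion {E : Type} (F : ℝ → Finset E) (e : E) : ℝ :=
  (volume {x | x ∈ Icc (0:ℝ) 1 ∧ e ∈ F x}).toReal

/-- The path cost `S^F(x) = Σ_{e ∈ F(x)} f_e(q(x), c^F(e), τ_e)`. -/
noncomputable def pathCost {E : Type} (f : E → ℝ → ℝ → ℝ → ℝ) (q : ℝ → ℝ)
    (toll : E → ℝ) (F : ℝ → Finset E) (x : ℝ) : ℝ :=
  ∑ e ∈ F x, f e (q x) (congestion F e) (toll e)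

/-- A flow is finitary if it partitions `[0,1]` into finitely many intervals,
each mapped to a single path. -/
def Finitary {E : Type} (F : ℝ → Finset E) : Prop :=
  ∃ (k : ℕ) (a : ℕ → ℝ), 0 < k ∧ a 0 = 0 ∧ a k = 1 ∧
    (∀ i < k, a i < a (i + 1)) ∧
    ∀ i < k, ∀ b ∈ Ioc (a i) (a (i + 1)), F b = F (a (i + 1))

/-- `F` is a Nash equilibrium. -/
def IsNashEq {E : Type} (f : E → ℝ → ℝ → ℝ → ℝ) (q : ℝ → ℝ) (toll : E → ℝ)
    (paths : Finset (Finset E)) (F : ℝ → Finset E) : Prop :=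
  ∀ x ∈ Icc (0:ℝ) 1, ∀ P ∈ paths,
    pathCost f q toll F x ≤ ∑ e ∈ P, f e (q x) (congestion F e) (toll e)


/-!
Write `μ = ∫ q`, `C = ∫ c` and let `A`, `B` be the integrals over `[0,1]` of the primitives
`Q`, `K` of `q` and of the cost `c`. Then `G(q - α c) = 1 - 2 (A - α B) / (μ - α C)`, so the
iniquity index is the derivative `2 (B μ - A C) / μ²` at `α = 0`.

At a Nash equilibrium the path cost is nonincreasing in the type: a richer type could take a
poorer type's path and, being richer, pay no more on it. Under CF1 and CF2 alike this makes
`c / q` nonincreasing, so costs are concentrated on the poor relative to incomes: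
`C Q(t) ≤ μ K(t)` for every `t`, and integrating gives `A C ≤ B μ`.
-/

noncomputable def cumulativeArea (q : ℝ → ℝ) : ℝ :=
  ∫ t in (0:ℝ)..1, ∫ x in (0:ℝ)..t, q x

theorem gini_eq_one_sub (q : ℝ → ℝ) :
    gini q = 1 - 2 * (cumulativeArea q / ∫ x in (0:ℝ)..1, q x) := by
  rw [gini, cumulativeArea, intervalIntegral.integral_div]

theorem IntervalIntegrable.primitive {q : ℝ → ℝ} {a b : ℝ}
    (hq : IntervalIntegrable q volume a b) :
    IntervalIntegrable (fun t => ∫ x in a..t, q x) volume a b :=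
  (intervalIntegral.continuousOn_primitive_interval' hq left_mem_uIcc).intervalIntegrable

theorem IntervalIntegrable.mul_antitoneOn {f g : ℝ → ℝ} {a b : ℝ} (hab : a ≤ b)
    (hf : IntervalIntegrable f volume a b) (hg : AntitoneOn g (Icc a b)) :
    IntervalIntegrable (fun x => f x * g x) volume a b := by
  rw [intervalIntegrable_iff_integrableOn_Ioc_of_le hab] at hf ⊢
  refine hf.mul_bdd (c := |g a| + |g b|) ?_ ?_
  · exact (aemeasurable_restrict_of_antitoneOn measurableSet_Ioc
      (hg.mono Ioc_subset_Icc_self)).aestronglyMeasurable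
  · refine ae_restrict_of_forall_mem measurableSet_Ioc fun x hx => ?_
    have hx' : x ∈ Icc a b := Ioc_subset_Icc_self hx
    have hgb : g b ≤ g x := hg hx' (right_mem_Icc.2 hab) hx'.2
    have hga : g x ≤ g a := hg (left_mem_Icc.2 hab) hx' hx'.1
    rw [Real.norm_eq_abs, abs_le]
    constructor <;> linarith [neg_abs_le (g b), le_abs_self (g a), abs_nonneg (g a),
      abs_nonneg (g b)]

theorem cumulativeArea_sub_mul {q c : ℝ → ℝ} (hq : IntervalIntegrable q volume 0 1)
    (hc : IntervalIntegrable c volume 0 1) (α : ℝ) :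
    cumulativeArea (fun x => q x - α * c x) = cumulativeArea q - α * cumulativeArea c := by
  have hprim : EqOn (fun t => ∫ x in (0:ℝ)..t, (q x - α * c x))
      (fun t => (∫ x in (0:ℝ)..t, q x) - α * ∫ x in (0:ℝ)..t, c x) (uIcc 0 1) := by
    intro t ht
    have hsub : uIcc 0 t ⊆ uIcc (0:ℝ) 1 := uIcc_subset_uIcc left_mem_uIcc ht
    simp only
    rw [intervalIntegral.integral_sub (hq.mono_set hsub) ((hc.mono_set hsub).const_mul α),
      intervalIntegral.integral_const_mul]
  rw [cumulativeArea, intervalIntegral.integral_congr hprim,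
    intervalIntegral.integral_sub hq.primitive (hc.primitive.const_mul α),
    intervalIntegral.integral_const_mul, cumulativeArea, cumulativeArea]

theorem hasDerivAt_gini_sub_mul {q c : ℝ → ℝ} (hq : IntervalIntegrable q volume 0 1)
    (hc : IntervalIntegrable c volume 0 1) (hμ : (∫ x in (0:ℝ)..1, q x) ≠ 0) :
    HasDerivAt (fun α => gini (fun x => q x - α * c x))
      (2 * (cumulativeArea c * (∫ x in (0:ℝ)..1, q x)
        - cumulativeArea q * ∫ x in (0:ℝ)..1, c x) / (∫ x in (0:ℝ)..1, q x) ^ 2) 0 := by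
  set μ := ∫ x in (0:ℝ)..1, q x
  set C := ∫ x in (0:ℝ)..1, c x
  have hgini : (fun α => gini (fun x => q x - α * c x))
      = fun α => 1 - 2 * ((cumulativeArea q - α * cumulativeArea c) / (μ - α * C)) := by
    funext α
    rw [gini_eq_one_sub, cumulativeArea_sub_mul hq hc,
      intervalIntegral.integral_sub hq (hc.const_mul α), intervalIntegral.integral_const_mul]
  have hnum := ((hasDerivAt_id' (0:ℝ)).mul_const (cumulativeArea c)).const_sub (cumulativeArea q)
  have hden := ((hasDerivAt_id' (0:ℝ)).mul_const C).const_sub μ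
  rw [hgini]
  refine (((hnum.div hden (by simpa using hμ)).const_mul 2).const_sub 1).congr_deriv ?_
  simp only [zero_mul, sub_zero, one_mul]
  field_simp
  ring

theorem mul_primitive_le_of_cross {q c : ℝ → ℝ} {a b t : ℝ}
    (hq : IntervalIntegrable q volume a b) (hc : IntervalIntegrable c volume a b)
    (hcross : ∀ s ∈ Icc a b, ∀ u ∈ Icc a b, s ≤ u → c u * q s ≤ c s * q u)
    (ht : t ∈ Icc a b) :
    (∫ x in a..b, c x) * (∫ x in a..t, q x) ≤ (∫ x in a..b, q x) * ∫ x in a..t, c x := by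
  have ht' : t ∈ uIcc a b := Icc_subset_uIcc ht
  have hleft : uIcc a t ⊆ uIcc a b := uIcc_subset_uIcc left_mem_uIcc ht'
  have hright : uIcc t b ⊆ uIcc a b := uIcc_subset_uIcc ht' right_mem_uIcc
  have hinner : ∀ s ∈ Icc a t, q s * (∫ u in t..b, c u) ≤ c s * ∫ u in t..b, q u := by
    intro s hs
    have := intervalIntegral.integral_mono_on ht.2 ((hc.mono_set hright).mul_const (q s))
      ((hq.mono_set hright).const_mul (c s)) fun u hu =>
        hcross s ⟨hs.1, hs.2.trans ht.2⟩ u ⟨ht.1.trans hu.1, hu.2⟩ (hs.2.trans hu.1)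
    rwa [intervalIntegral.integral_mul_const, intervalIntegral.integral_const_mul,
      mul_comm] at this
  have houter := intervalIntegral.integral_mono_on ht.1 ((hq.mono_set hleft).mul_const _)
    ((hc.mono_set hleft).mul_const _) hinner
  rw [intervalIntegral.integral_mul_const, intervalIntegral.integral_mul_const] at houter
  rw [← intervalIntegral.integral_add_adjacent_intervals (hc.mono_set hleft) (hc.mono_set hright),
    ← intervalIntegral.integral_add_adjacent_intervals (hq.mono_set hleft) (hq.mono_set hright)]
  linarith

theorem cumulativeArea_mul_le_of_cross {q c : ℝ → ℝ} (hq : IntervalIntegrable q volume 0 1)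
    (hc : IntervalIntegrable c volume 0 1)
    (hcross : ∀ s ∈ Icc (0:ℝ) 1, ∀ u ∈ Icc (0:ℝ) 1, s ≤ u → c u * q s ≤ c s * q u) :
    cumulativeArea q * (∫ x in (0:ℝ)..1, c x) ≤ cumulativeArea c * ∫ x in (0:ℝ)..1, q x := by
  rw [cumulativeArea, cumulativeArea, ← intervalIntegral.integral_mul_const,
    ← intervalIntegral.integral_mul_const]
  refine intervalIntegral.integral_mono_on zero_le_one (hq.primitive.mul_const _)
    (hc.primitive.mul_const _) fun t ht => ?_
  linarith [mul_primitive_le_of_cross hq hc hcross ht]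

section Game

variable {E : Type} {f : E → ℝ → ℝ → ℝ → ℝ} {q : ℝ → ℝ} {toll : E → ℝ} {F : ℝ → Finset E}

theorem pathCost_nonneg (hf_nonneg : ∀ e w z t, 0 ≤ f e w z t) (x : ℝ) :
    0 ≤ pathCost f q toll F x :=
  Finset.sum_nonneg fun e _ => hf_nonneg e _ _ _

theorem IsNashEq.pathCost_antitoneOn {paths : Finset (Finset E)}
    (hNE : IsNashEq f q toll paths F) (hF : ∀ x ∈ Icc (0:ℝ) 1, F x ∈ paths)
    (hq_mono : MonotoneOn q (Icc 0 1))
    (hf_anti_income : ∀ e z t, ∀ w w', w ≤ w' → f e w' z t ≤ f e w z t) :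
    AntitoneOn (pathCost f q toll F) (Icc 0 1) := fun x hx y hy hxy =>
  calc pathCost f q toll F y ≤ ∑ e ∈ F x, f e (q y) (congestion F e) (toll e) :=
        hNE y hy (F x) (hF x hx)
    _ ≤ pathCost f q toll F x :=
        Finset.sum_le_sum fun e _ => hf_anti_income e _ _ _ _ (hq_mono hx hy hxy)

end Game

section AgentCost

variable {I : Set ℝ} {q S c : ℝ → ℝ}

theorem agentCost_cross_le (hq_mono : MonotoneOn q I) (hq_nonneg : ∀ x ∈ I, 0 ≤ q x)
    (hS_anti : AntitoneOn S I) (hS_nonneg : ∀ x, 0 ≤ S x)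
    (hc : (∀ x, c x = S x) ∨ ∀ x, c x = q x * S x) :
    ∀ s ∈ I, ∀ u ∈ I, s ≤ u → c u * q s ≤ c s * q u := by
  intro s hs u hu hsu
  have hS : S u ≤ S s := hS_anti hs hu hsu
  rcases hc with hc | hc <;> rw [hc s, hc u]
  · calc S u * q s ≤ S s * q s := mul_le_mul_of_nonneg_right hS (hq_nonneg s hs)
      _ ≤ S s * q u := mul_le_mul_of_nonneg_left (hq_mono hs hu hsu) (hS_nonneg s)
  · have := mul_le_mul_of_nonneg_left hS (mul_nonneg (hq_nonneg s hs) (hq_nonneg u hu))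
    linarith

theorem agentCost_intervalIntegrable (hq : IntervalIntegrable q volume 0 1)
    (hS_anti : AntitoneOn S (Icc 0 1)) (hc : (∀ x, c x = S x) ∨ ∀ x, c x = q x * S x) :
    IntervalIntegrable c volume 0 1 := by
  rcases hc with hc | hc <;> rw [funext hc]
  · exact AntitoneOn.intervalIntegrable (by rwa [uIcc_of_le zero_le_one])
  · exact hq.mul_antitoneOn zero_le_one hS_anti

end AgentCost

theorem iniquity_index_nonneg_general
    {E : Type}
    (toll : E → ℝ)
    (paths : Finset (Finset E))
    (q : ℝ → ℝ)
    (hq_mono : MonotoneOn q (Icc 0 1)) (hq0 : 0 < q 0)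
    (hq_int : IntervalIntegrable q volume 0 1)
    (hμ_pos : 0 < ∫ x in (0:ℝ)..1, q x)
    (f : E → ℝ → ℝ → ℝ → ℝ)
    (hf_nonneg : ∀ e w z t, 0 ≤ f e w z t)
    (hf_anti_income : ∀ e z t, ∀ w w', w ≤ w' → f e w' z t ≤ f e w z t)
    (F : ℝ → Finset E) (hF : ∀ x ∈ Icc (0:ℝ) 1, F x ∈ paths)
    (hNE : IsNashEq f q toll paths F)
    (cst : ℝ → ℝ)
    (hcst : (∀ x, cst x = pathCost f q toll F x) ∨
            (∀ x, cst x = q x * pathCost f q toll F x)) :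
    ∃ I : ℝ, 0 ≤ I ∧
      Tendsto (fun α : ℝ => (gini (fun x => q x - α * cst x) - gini q) / α)
        (nhdsWithin 0 (Ioi 0)) (nhds I) := by
  have hq_nonneg : ∀ x ∈ Icc (0:ℝ) 1, 0 ≤ q x := fun x hx =>
    hq0.le.trans (hq_mono (left_mem_Icc.2 zero_le_one) hx hx.1)
  have hS_anti := hNE.pathCost_antitoneOn hF hq_mono hf_anti_income
  have hcst_int := agentCost_intervalIntegrable hq_int hS_anti hcst
  have hcross := agentCost_cross_le hq_mono hq_nonneg hS_anti (pathCost_nonneg hf_nonneg) hcst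
  have hArea := cumulativeArea_mul_le_of_cross hq_int hcst_int hcross
  have hlim := (hasDerivAt_gini_sub_mul hq_int hcst_int hμ_pos.ne').tendsto_slope_zero_right
  refine ⟨_, div_nonneg (by linarith) (sq_nonneg _), hlim.congr fun α => ?_⟩
  simp only [zero_add, zero_mul, sub_zero, smul_eq_mul, div_eq_inv_mul]

/-- The iniquity index `I(Γ) = lim_{α→0⁺} (G(q_α) − G(q))/α` of a symmetric nonatomic
congestion game at a Nash equilibrium, with agent cost given by CF1
(`cost^F = S^F`) or CF2 (`cost^F = q·S^F`), exists and is nonnegative. -/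
theorem iniquity_index_nonneg
    {E : Type} [Fintype E] [DecidableEq E]
    (toll : E → ℝ) (htoll : ∀ e, 0 ≤ toll e)
    (paths : Finset (Finset E)) (hpaths : paths.Nonempty)
    (q : ℝ → ℝ) (hq_meas : Measurable q)
    (hq_mono : MonotoneOn q (Icc 0 1)) (hq0 : 0 < q 0)
    (hq_int : IntervalIntegrable q volume 0 1)
    (hμ_pos : 0 < ∫ x in (0:ℝ)..1, q x)
    (f : E → ℝ → ℝ → ℝ → ℝ)
    (hf_nonneg : ∀ e w z t, 0 ≤ f e w z t)
    (hf_anti_income : ∀ e z t, ∀ w w', w ≤ w' → f e w' z t ≤ f e w z t)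
    (hf_mono_cong : ∀ e w t, ∀ z z', z ≤ z' → f e w z t ≤ f e w z' t)
    (hf_mono_toll : ∀ e w z, ∀ t t', t ≤ t' → f e w z t ≤ f e w z t')
    (F : ℝ → Finset E) (hF : ∀ x ∈ Icc (0:ℝ) 1, F x ∈ paths)
    (hFfin : Finitary F)
    (hNE : IsNashEq f q toll paths F)
    (cst : ℝ → ℝ)
    (hcst : (∀ x, cst x = pathCost f q toll F x) ∨
            (∀ x, cst x = q x * pathCost f q toll F x)) :
    ∃ I : ℝ, 0 ≤ I ∧
      Tendsto (fun α : ℝ => (gini (fun x => q x - α * cst x) - gini q) / α)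
        (nhdsWithin 0 (Ioi 0)) (nhds I) :=
  iniquity_index_nonneg_general toll paths q hq_mono hq0 hq_int hμ_pos f hf_nonneg hf_anti_income F
    hF hNE cst hcst
end

section
/- In the Pigou network with income distribution q(x) = 2x, tolls chosen so that the poorest fraction s ∈ [0,1] of agents uses the upper link (toll difference τ = 2s² on the lower link), the equilibrium cost is cost(x) = 2x for x ≤ s and cost(x) = (1−s)·2x + 2s² for x > s. The social cost satisfies ∫₀¹ cost(x)dx = 1 − s + 2s² − s³, and this expression attains its minimum over s ∈ [0,1] at s = 1/3, with minimum value 23/27 (which is strictly less than 1). -/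
/-!
The social cost is the integral of a function that is affine on each side of `s`, so it is
computed by splitting `[0, 1]` at `s`. Its minimum comes from the factorisation
`1 - s + 2 s² - s³ - 23/27 = (s - 1/3)² (4/3 - s)`.
-/

open Set MeasureTheory intervalIntegral
open scoped Interval

theorem intervalIntegral.integral_ite_le {E : Type*} [NormedAddCommGroup E] [NormedSpace ℝ E]
    {μ : Measure ℝ} {f g : ℝ → E} {a s b : ℝ} (has : a ≤ s) (hsb : s ≤ b)
    (hf : IntervalIntegrable f μ a s) (hg : IntervalIntegrable g μ s b) :
    ∫ x in a..b, (if x ≤ s then f x else g x) ∂μ =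
      (∫ x in a..s, f x ∂μ) + ∫ x in s..b, g x ∂μ := by
  have left : EqOn (fun x => if x ≤ s then f x else g x) f (Ι a s) := fun x hx => by
    rw [uIoc_of_le has] at hx
    exact if_pos hx.2
  have right : EqOn (fun x => if x ≤ s then f x else g x) g (Ι s b) := fun x hx => by
    rw [uIoc_of_le hsb] at hx
    exact if_neg (not_le.2 hx.1)
  rw [← integral_add_adjacent_intervals ((intervalIntegrable_congr left).2 hf)
      ((intervalIntegrable_congr right).2 hg),
    integral_congr_ae (ae_of_all _ fun x hx => left hx),
    integral_congr_ae (ae_of_all _ fun x hx => right hx)]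

theorem intervalIntegral.integral_mul_add_const (a b c d : ℝ) :
    ∫ x in a..b, c * x + d = c * (b ^ 2 - a ^ 2) / 2 + d * (b - a) := by
  rw [integral_add ((continuous_const_mul c).intervalIntegrable a b) intervalIntegrable_const,
    intervalIntegral.integral_const_mul, integral_id, integral_const, smul_eq_mul]
  ring

theorem le_one_sub_add_two_mul_sq_sub_pow_three {t : ℝ} (ht : t ≤ 4 / 3) :
    (23 : ℝ) / 27 ≤ 1 - t + 2 * t ^ 2 - t ^ 3 := by
  have factor_nonneg : 0 ≤ (t - 1 / 3) ^ 2 * (4 / 3 - t) :=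
    mul_nonneg (sq_nonneg _) (sub_nonneg.2 ht)
  linarith [show 1 - t + 2 * t ^ 2 - t ^ 3 - 23 / 27 = (t - 1 / 3) ^ 2 * (4 / 3 - t) by ring]

/-- In the Pigou network with income distribution `q(x) = 2x`, toll `τ = 2s²` on the
lower link, and the poorest fraction `s` on the upper link, the equilibrium cost is
`cost(x) = 2x` for `x ≤ s` and `cost(x) = (1−s)·2x + 2s²` for `x > s`. The social cost
is `∫₀¹ cost = 1 − s + 2s² − s³`, minimized over `s ∈ [0,1]` at `s = 1/3` with minimum
value `23/27 < 1`. -/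
theorem pigou_social_cost
    (s : ℝ) (hs : s ∈ Icc (0:ℝ) 1)
    (cost : ℝ → ℝ)
    (hcost : ∀ x : ℝ, cost x = if x ≤ s then 2 * x else (1 - s) * (2 * x) + 2 * s ^ 2) :
    (∫ x in (0:ℝ)..1, cost x) = 1 - s + 2 * s ^ 2 - s ^ 3 ∧
    (∀ s' ∈ Icc (0:ℝ) 1, (23:ℝ) / 27 ≤ 1 - s' + 2 * s' ^ 2 - s' ^ 3) ∧
    1 - (1/3 : ℝ) + 2 * (1/3 : ℝ) ^ 2 - (1/3 : ℝ) ^ 3 = 23 / 27 ∧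
    (23:ℝ) / 27 < 1 := by
  refine ⟨?_, fun s' hs' => le_one_sub_add_two_mul_sq_sub_pow_three (by linarith [hs'.2]),
    by norm_num, by norm_num⟩
  have cost_eq : cost = fun x => if x ≤ s then 2 * x + 0 else 2 * (1 - s) * x + 2 * s ^ 2 :=
    funext fun x => by rw [hcost]; split_ifs <;> ring
  rw [cost_eq, integral_ite_le hs.1 hs.2 ((by fun_prop : Continuous _).intervalIntegrable _ _)
    ((by fun_prop : Continuous _).intervalIntegrable _ _), integral_mul_add_const,
    integral_mul_add_const]
  ring
end

section
/- (Iniquity of the Pigou network.) In the Pigou network with latencies 1 and x and income distribution q(x) = (β+1)x^β for β ≥ 0, when tolls are selected to minimize the actual latency, the optimal switching point is s = 1/2, the toll at the Nash (Wardrop) equilibrium is τ = q(s)·s = (β+1)·2^{−(β+1)}, and the iniquity index equals I(Γ) = lim_{α→0⁺}(G(q_α) − G(q))/α = β(β+1)/((β+2)·2^{β+3}), where q_α(x) = q(x) − α·cost(x) with cost(x) = (β+1)x^β for x ≤ 1/2 and cost(x) = (1/2)(β+1)x^β + (β+1)2^{−(β+1)} for x > 1/2. -/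
/-
Perturbing the income `q` by `α c` turns the total income `M` and the integrated cumulative
income `A` into `M - α C` and `A - α B`, where `C` and `B` are the same quantities for `c`. So the
Gini coefficient of `q - α c` is the Möbius function `1 - 2 (A - α B) / (M - α C)` of `α`, and
the iniquity index is its derivative `2 (M B - A C) / M²` at `0`. For the Pigou network all four
numbers are integrals of powers of `x`, split at the switching point, and at `s = 1/2` the
expression collapses to `β (β + 1) / ((β + 2) 2^(β + 3))`.
-/

open Set Filter

open MeasureTheory (volume)
open intervalIntegral Topology

section Gini

variable {q c : ℝ → ℝ}

theorem integral_integral_sub_const_mul (hq : IntervalIntegrable q volume 0 1)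
    (hc : IntervalIntegrable c volume 0 1) (α : ℝ) :
    ∫ t in (0:ℝ)..1, ∫ x in (0:ℝ)..t, (q x - α * c x) =
      (∫ t in (0:ℝ)..1, ∫ x in (0:ℝ)..t, q x) - α * ∫ t in (0:ℝ)..1, ∫ x in (0:ℝ)..t, c x := by
  have hsub : ∀ {f : ℝ → ℝ}, IntervalIntegrable f volume 0 1 →
      ∀ t ∈ uIcc (0:ℝ) 1, IntervalIntegrable f volume 0 t := fun hf t ht =>
    hf.mono_set (uIcc_subset_uIcc_left ht)
  have hprim : ∀ {f : ℝ → ℝ}, IntervalIntegrable f volume 0 1 →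
      IntervalIntegrable (fun t => ∫ x in (0:ℝ)..t, f x) volume 0 1 := fun hf =>
    (continuousOn_primitive_interval' hf left_mem_uIcc).intervalIntegrable
  rw [← integral_const_mul, ← integral_sub (hprim hq) ((hprim hc).const_mul α)]
  refine integral_congr fun t ht => ?_
  rw [integral_sub (hsub hq t ht) ((hsub hc t ht).const_mul α), integral_const_mul]

theorem gini_sub_const_mul (hq : IntervalIntegrable q volume 0 1)
    (hc : IntervalIntegrable c volume 0 1) (α : ℝ) :
    gini (fun x => q x - α * c x) =
      1 - 2 * ((∫ t in (0:ℝ)..1, ∫ x in (0:ℝ)..t, q x) - α * ∫ t in (0:ℝ)..1, ∫ x in (0:ℝ)..t, c x) /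
        ((∫ x in (0:ℝ)..1, q x) - α * ∫ x in (0:ℝ)..1, c x) := by
  rw [gini, integral_div, integral_integral_sub_const_mul hq hc, integral_sub hq (hc.const_mul α),
    integral_const_mul, mul_div_assoc]

theorem tendsto_gini_sub_const_mul (hq : IntervalIntegrable q volume 0 1)
    (hc : IntervalIntegrable c volume 0 1) (hM : ∫ x in (0:ℝ)..1, q x ≠ 0) :
    Tendsto (fun α => (gini (fun x => q x - α * c x) - gini q) / α) (𝓝[>] 0)
      (𝓝 (2 * ((∫ x in (0:ℝ)..1, q x) * (∫ t in (0:ℝ)..1, ∫ x in (0:ℝ)..t, c x) -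
        (∫ t in (0:ℝ)..1, ∫ x in (0:ℝ)..t, q x) * ∫ x in (0:ℝ)..1, c x) /
          (∫ x in (0:ℝ)..1, q x) ^ 2)) := by
  set M := ∫ x in (0:ℝ)..1, q x
  set A := ∫ t in (0:ℝ)..1, ∫ x in (0:ℝ)..t, q x
  set B := ∫ t in (0:ℝ)..1, ∫ x in (0:ℝ)..t, c x
  set C := ∫ x in (0:ℝ)..1, c x
  have hderiv : HasDerivAt (fun α : ℝ => 1 - 2 * ((A - α * B) / (M - α * C)))
      (2 * (M * B - A * C) / M ^ 2) 0 := by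
    have hnum := ((hasDerivAt_id' (0:ℝ)).mul_const B).const_sub A
    have hden := ((hasDerivAt_id' (0:ℝ)).mul_const C).const_sub M
    refine (((hnum.fun_div hden (by simpa using hM)).const_mul 2).const_sub 1).congr_deriv ?_
    simp only [zero_mul, sub_zero]
    field_simp
    ring
  have hgini : ∀ α, gini (fun x => q x - α * c x) = 1 - 2 * (A - α * B) / (M - α * C) :=
    gini_sub_const_mul hq hc
  refine hderiv.tendsto_slope_zero_right.congr fun α => ?_
  have hgini0 : gini q = 1 - 2 * (A - 0 * B) / (M - 0 * C) := by simpa using hgini 0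
  rw [hgini, hgini0, zero_add, smul_eq_mul, div_eq_inv_mul]
  ring

end Gini

theorem integral_rpow_add_one {r : ℝ} (hr : -1 < r) (a b : ℝ) :
    ∫ x in a..b, x ^ (r + 1) = (b ^ (r + 2) - a ^ (r + 2)) / (r + 2) := by
  rw [integral_rpow (.inl (by linarith))]
  ring_nf

noncomputable def pigouIncome (β x : ℝ) : ℝ := (β + 1) * x ^ β

/- With the poorest `s` on the upper link (latency `1`) and the rest on the lower one (latency
`1 - s`, toll `τ`), agent `x` pays `q x` or `(1 - s) q x + τ`; the toll `τ = q(s) s` makes agent `s`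
indifferent between the two, so `pigouCost` is the equilibrium cost. -/
noncomputable def pigouToll (β s : ℝ) : ℝ := pigouIncome β s * s

noncomputable def pigouCost (β s x : ℝ) : ℝ :=
  if x ≤ s then pigouIncome β x else (1 - s) * pigouIncome β x + pigouToll β s

section Pigou

variable {β s : ℝ}

theorem pigouCost_eqOn_Iic : EqOn (pigouCost β s) (pigouIncome β) (Iic s) := fun _ hx =>
  if_pos hx

theorem pigouCost_eqOn_Ici :
    EqOn (pigouCost β s) (fun x => (1 - s) * pigouIncome β x + pigouToll β s) (Ici s) := by
  intro x hx
  rcases (mem_Ici.mp hx).eq_or_lt with rfl | hsx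
  · rw [pigouCost, if_pos le_rfl, pigouToll]; ring
  · exact if_neg hsx.not_ge

theorem pigouToll_eq (hs : 0 < s) : pigouToll β s = (β + 1) * s ^ (β + 1) := by
  rw [pigouToll, pigouIncome, Real.rpow_add_one hs.ne']
  ring

theorem intervalIntegrable_pigouIncome (hβ : -1 < β) (a b : ℝ) :
    IntervalIntegrable (pigouIncome β) volume a b :=
  (intervalIntegral.intervalIntegrable_rpow' hβ).const_mul _

theorem integral_pigouIncome (hβ : -1 < β) (a b : ℝ) :
    ∫ x in a..b, pigouIncome β x = b ^ (β + 1) - a ^ (β + 1) := by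
  have hβ1 : β + 1 ≠ 0 := by linarith
  simp only [pigouIncome]
  rw [integral_const_mul, integral_rpow (.inl hβ)]
  field_simp

theorem integral_zero_pigouIncome (hβ : -1 < β) (t : ℝ) :
    ∫ x in (0:ℝ)..t, pigouIncome β x = t ^ (β + 1) := by
  rw [integral_pigouIncome hβ, Real.zero_rpow (by linarith), sub_zero]

theorem intervalIntegrable_pigouCost (hβ : -1 < β) {a b : ℝ} (ha : a ≤ s) (hb : s ≤ b) :
    IntervalIntegrable (pigouCost β s) volume a b := by
  have hleft : IntervalIntegrable (pigouCost β s) volume a s := by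
    refine (intervalIntegrable_congr (pigouCost_eqOn_Iic.mono ?_)).mpr
      (intervalIntegrable_pigouIncome hβ a s)
    rw [uIoc_of_le ha]
    exact Ioc_subset_Iic_self
  have hright : IntervalIntegrable (pigouCost β s) volume s b := by
    refine (intervalIntegrable_congr (pigouCost_eqOn_Ici.mono ?_)).mpr
      (((intervalIntegrable_pigouIncome hβ s b).const_mul (1 - s)).add intervalIntegrable_const)
    rw [uIoc_of_le hb]
    exact Ioc_subset_Ioi_self.trans Ioi_subset_Ici_self
  exact hleft.trans hright

theorem integral_pigouCost_of_le (hβ : -1 < β) {t : ℝ} (ht : t ∈ Icc 0 s) :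
    ∫ x in (0:ℝ)..t, pigouCost β s x = t ^ (β + 1) := by
  rw [← integral_zero_pigouIncome hβ t]
  refine integral_congr (pigouCost_eqOn_Iic.mono ?_)
  rw [uIcc_of_le ht.1]
  exact Icc_subset_Iic_self.trans (Iic_subset_Iic.mpr ht.2)

theorem integral_pigouCost_of_ge (hβ : -1 < β) (hs : 0 ≤ s) {t : ℝ} (ht : s ≤ t) :
    ∫ x in (0:ℝ)..t, pigouCost β s x =
      (1 - s) * t ^ (β + 1) + s * s ^ (β + 1) + pigouToll β s * (t - s) := by
  rw [← integral_add_adjacent_intervals (intervalIntegrable_pigouCost hβ hs le_rfl)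
    (intervalIntegrable_pigouCost hβ le_rfl ht), integral_pigouCost_of_le hβ ⟨hs, le_rfl⟩]
  have hright : ∫ x in s..t, pigouCost β s x =
      ∫ x in s..t, ((1 - s) * pigouIncome β x + pigouToll β s) := by
    refine integral_congr (pigouCost_eqOn_Ici.mono ?_)
    rw [uIcc_of_le ht]
    exact Icc_subset_Ici_self
  rw [hright, integral_add ((intervalIntegrable_pigouIncome hβ s t).const_mul _)
    intervalIntegrable_const, integral_const_mul, integral_pigouIncome hβ, integral_const,
    smul_eq_mul]
  ring

theorem integral_integral_pigouIncome (hβ : -1 < β) :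
    ∫ t in (0:ℝ)..1, ∫ x in (0:ℝ)..t, pigouIncome β x = 1 / (β + 2) := by
  simp only [integral_zero_pigouIncome hβ]
  rw [integral_rpow_add_one hβ, Real.one_rpow, Real.zero_rpow (by linarith), sub_zero]

theorem integral_integral_pigouCost (hβ : -1 < β) (hs : s ∈ Icc (0:ℝ) 1) :
    ∫ t in (0:ℝ)..1, ∫ x in (0:ℝ)..t, pigouCost β s x =
      (s ^ (β + 2) + (1 - s) * (1 - s ^ (β + 2))) / (β + 2) + s * s ^ (β + 1) * (1 - s) +
        pigouToll β s * (1 - s) ^ 2 / 2 := by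
  have hprim : ∀ a b, a ∈ uIcc (0:ℝ) 1 → b ∈ uIcc (0:ℝ) 1 →
      IntervalIntegrable (fun t => ∫ x in (0:ℝ)..t, pigouCost β s x) volume a b := fun a b ha hb =>
    ((continuousOn_primitive_interval' (intervalIntegrable_pigouCost hβ hs.1 hs.2)
      left_mem_uIcc).mono (uIcc_subset_uIcc ha hb)).intervalIntegrable
  have hs_mem : s ∈ uIcc (0:ℝ) 1 := by rwa [uIcc_of_le zero_le_one]
  have hleft : ∫ t in (0:ℝ)..s, ∫ x in (0:ℝ)..t, pigouCost β s x = s ^ (β + 2) / (β + 2) := by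
    rw [integral_congr (g := fun t => t ^ (β + 1)) fun t ht => ?_, integral_rpow_add_one hβ,
      Real.zero_rpow (by linarith), sub_zero]
    rw [uIcc_of_le hs.1] at ht
    exact integral_pigouCost_of_le hβ ht
  have hright : ∫ t in s..1, ∫ x in (0:ℝ)..t, pigouCost β s x =
      ∫ t in s..1, ((1 - s) * t ^ (β + 1) + s * s ^ (β + 1) + pigouToll β s * (t - s)) := by
    refine integral_congr fun t ht => ?_
    rw [uIcc_of_le hs.2] at ht
    exact integral_pigouCost_of_ge hβ hs.1 ht.1
  have hlin : ∫ t in s..1, (t - s) = (1 - s) ^ 2 / 2 := by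
    rw [integral_comp_sub_right (fun t => t), integral_id]
    ring
  rw [← integral_add_adjacent_intervals (hprim 0 s left_mem_uIcc hs_mem)
    (hprim s 1 hs_mem right_mem_uIcc), hleft, hright,
    integral_add (((intervalIntegral.intervalIntegrable_rpow' (by linarith)).const_mul _).add
      intervalIntegrable_const) ((intervalIntegrable_id.sub intervalIntegrable_const).const_mul _),
    integral_add ((intervalIntegral.intervalIntegrable_rpow' (by linarith)).const_mul _)
      intervalIntegrable_const, integral_const, integral_const_mul, integral_const_mul,
    integral_rpow_add_one hβ, hlin, Real.one_rpow, smul_eq_mul]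
  ring

theorem pigouToll_half : pigouToll β (1/2) = (β + 1) * (2:ℝ) ^ (-(β + 1)) := by
  rw [pigouToll_eq one_half_pos, one_div, Real.inv_rpow zero_le_two, Real.rpow_neg zero_le_two]

theorem tendsto_gini_pigouCost_half (hβ : -1 < β) :
    Tendsto (fun α => (gini (fun x => pigouIncome β x - α * pigouCost β (1/2) x) -
      gini (pigouIncome β)) / α) (𝓝[>] 0) (𝓝 (β * (β + 1) / ((β + 2) * (2:ℝ) ^ (β + 3)))) := by
  have hhalf : (1/2 : ℝ) ∈ Icc 0 1 := by norm_num
  convert tendsto_gini_sub_const_mul (intervalIntegrable_pigouIncome hβ 0 1)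
    (intervalIntegrable_pigouCost hβ hhalf.1 hhalf.2)
    (by norm_num [integral_zero_pigouIncome hβ]) using 2
  have hpow1 : (1/2 : ℝ) ^ (β + 1) = ((2 : ℝ) ^ (β + 1))⁻¹ := by
    rw [one_div, Real.inv_rpow zero_le_two]
  have hpow2 : (1/2 : ℝ) ^ (β + 2) = ((2 : ℝ) ^ (β + 1))⁻¹ / 2 := by
    rw [show β + 2 = (β + 1) + 1 by ring, Real.rpow_add_one (by norm_num), hpow1]; ring
  have hpow3 : (2 : ℝ) ^ (β + 3) = (2 : ℝ) ^ (β + 1) * 4 := by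
    rw [show β + 3 = (β + 1) + 2 by ring, Real.rpow_add two_pos, Real.rpow_two]; norm_num
  have hβ2 : β + 2 ≠ 0 := by linarith
  rw [integral_zero_pigouIncome hβ, integral_integral_pigouIncome hβ,
    integral_integral_pigouCost hβ hhalf, integral_pigouCost_of_ge hβ hhalf.1 hhalf.2,
    pigouToll_eq one_half_pos, hpow1, hpow2, hpow3, Real.one_rpow]
  field_simp
  ring

end Pigou

/-- **Iniquity of the Pigou network.** For the Pigou network with latencies `1` and `x`
and income distribution `q(x) = (β+1)x^β`, when tolls are selected to minimize the actual
latency: the optimal switching point is `s = 1/2` (it minimizes `s + (1−s)²`), the toll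
at the Nash (Wardrop) equilibrium is `τ = q(1/2)·(1/2) = (β+1)·2^{−(β+1)}`, and the
iniquity index equals `I(Γ) = β(β+1)/((β+2)·2^{β+3})`. -/
theorem pigou_iniquity
    (β : ℝ) (hβ : 0 ≤ β)
    (q : ℝ → ℝ) (hq : ∀ x : ℝ, q x = (β + 1) * x ^ β)
    (τ : ℝ) (hτ : τ = (β + 1) * (2:ℝ) ^ (-(β + 1)))
    (cost : ℝ → ℝ)
    (hcost : ∀ x : ℝ, cost x =
      if x ≤ 1/2 then (β + 1) * x ^ β else (1/2) * (β + 1) * x ^ β + τ) :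
    (∀ s ∈ Icc (0:ℝ) 1, (1/2 : ℝ) + (1 - 1/2 : ℝ) ^ 2 ≤ s + (1 - s) ^ 2) ∧
    q (1/2) * (1/2) = τ ∧
    Tendsto (fun α : ℝ => (gini (fun x => q x - α * cost x) - gini q) / α)
      (nhdsWithin 0 (Ioi 0))
      (nhds (β * (β + 1) / ((β + 2) * (2:ℝ) ^ (β + 3)))) := by
  have hq' : q = pigouIncome β := funext hq
  have hcost' : cost = pigouCost β (1/2) := by
    ext x
    rw [hcost, pigouCost, hτ, ← pigouToll_half]
    simp only [pigouIncome]
    norm_num [mul_assoc]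
  subst hq' hcost' hτ
  refine ⟨fun s _ => by nlinarith [sq_nonneg (s - 1/2)], pigouToll_half, ?_⟩
  exact tendsto_gini_pigouCost_half (by linarith)
end
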